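/- Consider a sequence of logistic regression problems indexed by n with dimension p = p(n) satisfying p(n)/n → 0. For each n: the observed pairs (X_i, Y_i), i = 1, …, n, are independent with Y_i | X_i ~ Bernoulli(ρ'(⟨X_i, β₀⟩)), where the true coefficient vector β₀ = β₀(n) ∈ ℝ^p satisfies ‖β₀‖₂ ≤ C₃ (Condition 4); E‖X_i‖₂² ≤ C₂·p for all i (Condition 2); and, almost surely, there exist constants c₁, c₂ > 0, ζ ∈ (0,1), N₀ (not depending on n) such that for every n > N₀ and every S ⊆ {1,…,n} with |S| ≥ (1−ζ)n, c₁|S| ≤ λ_min(Σ_{i∈S} X_i X_iᵀ) ≤ λ_max(Σ_{i∈S} X_i X_iᵀ) ≤ c₂|S| (Condition 3). Let the synthetic data (X*_i, Y*_i)_{i=1}^M ⊂ ℝ^p × {0,1} satisfy ‖(1/M) Σ_{i=1}^M X*_i X*_iᵀ‖_op ≤ Λ for a constant Λ, and let the tuning parameter satisfy 0 < τ = τ(n) ≤ C₄·p. Then ‖β̂_M − β₀‖₂² = O_p(p/n); that is, for every ε > 0 there exist B̃ < ∞ and N such that for all n ≥ N, P( ‖β̂_M − β₀‖₂² > B̃·p(n)/n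 ) ≤ ε. -/

import Mathlib

/-!
Write `S = ∑ᵢ (Yᵢ - ρ'⟨Xᵢ, β₀⟩) Xᵢ` for the score at the truth. The MAP objective is concave, so if
`‖β̂ - β₀‖ ≥ t` then the point `β₀ + v` of the segment `[β₀, β̂]` with `‖v‖ = t` is at least as good
as `β₀`. Expanding the objective around `β₀`, its gain at `β₀ + v` is at most
`‖S‖ t + τ √Λ t - c₁ (1 - ζ) κ n t² / 2`: the synthetic part is bounded by Cauchy–Schwarz and the
operator-norm bound, and the curvature comes from the at least `(1 - ζ) n` indices (Condition 3 and
a counting argument) at which both `⟨Xᵢ, β₀⟩` and `⟨Xᵢ, v⟩` are bounded, so that `ρ'' ≥ κ` there.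
Hence `‖β̂ - β₀‖ < t` as soon as `‖S‖ + τ √Λ < c₁ (1 - ζ) κ n t / 2`.

The summands of `S` are independent and centred (this is where `E[Y | X] = ρ'⟨X, β₀⟩` enters), so
`E‖S‖² ≤ C₂ p n` and by Markov `‖S‖ = O_p(√(p n))`; also `τ ≤ C₄ p ≤ C₄ √(p n)`. Taking
`t ≍ √(p / n)` gives the rate on the event where Condition 3 holds from a fixed index on, whose
probability tends to one.
-/

open MeasureTheory ProbabilityTheory Filter
open scoped RealInnerProductSpace BigOperators ENNReal

/-- The logistic log-partition function `ρ(t) = log(1 + eᵗ)`. -/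
noncomputable def rho (t : ℝ) : ℝ := Real.log (1 + Real.exp t)

/-- The logistic (sigmoid) function `ρ'(t) = eᵗ/(1 + eᵗ)`. -/
noncomputable def rho' (t : ℝ) : ℝ := Real.exp t / (1 + Real.exp t)

/-- The catalytic-prior MAP objective (to be maximized). -/
noncomputable def mapObj {n M p : ℕ} (τ : ℝ)
    (X : Fin n → EuclideanSpace ℝ (Fin p)) (Y : Fin n → ℝ)
    (Xs : Fin M → EuclideanSpace ℝ (Fin p)) (Ys : Fin M → ℝ)
    (β : EuclideanSpace ℝ (Fin p)) : ℝ :=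
  (∑ i, (Y i * ⟪X i, β⟫ - rho ⟪X i, β⟫)) +
    (τ / M) * ∑ i, (Ys i * ⟪Xs i, β⟫ - rho ⟪Xs i, β⟫)

open Set

lemma rho'_eq_sigmoid : rho' = Real.sigmoid := by
  funext t
  rw [rho', Real.sigmoid_def, Real.exp_neg]
  field_simp
  ring

lemma hasDerivAt_rho (t : ℝ) : HasDerivAt rho (rho' t) t :=
  ((Real.hasDerivAt_exp t).const_add 1).log (by positivity)

lemma hasDerivAt_rho' (t : ℝ) : HasDerivAt rho' (rho' t * (1 - rho' t)) t := by
  rw [rho'_eq_sigmoid]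
  exact Real.hasDerivAt_sigmoid t

lemma differentiable_rho : Differentiable ℝ rho := fun t => (hasDerivAt_rho t).differentiableAt

lemma convexOn_rho : ConvexOn ℝ univ rho := by
  refine Monotone.convexOn_univ_of_deriv differentiable_rho ?_
  rw [funext fun t => (hasDerivAt_rho t).deriv, rho'_eq_sigmoid]
  exact Real.sigmoid_monotone

lemma measurable_rho' : Measurable rho' :=
  rho'_eq_sigmoid ▸ continuous_sigmoid.measurable

lemma abs_sub_rho'_le_one {y : ℝ} (hy : y = 0 ∨ y = 1) (t : ℝ) : |y - rho' t| ≤ 1 := by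
  rw [rho'_eq_sigmoid, abs_le]
  have := Real.sigmoid_nonneg t
  have := Real.sigmoid_le_one t
  rcases hy with rfl | rfl <;> constructor <;> linarith

lemma norm_sub_rho'_smul_le {E : Type*} [NormedAddCommGroup E] [NormedSpace ℝ E] {y : ℝ}
    (hy : y = 0 ∨ y = 1) (t : ℝ) (x : E) : ‖(y - rho' t) • x‖ ≤ ‖x‖ := by
  rw [norm_smul, Real.norm_eq_abs]
  exact mul_le_of_le_one_left (norm_nonneg x) (abs_sub_rho'_le_one hy t)

lemma sigmoid_neg_sq_le_rho'_mul_one_sub {K x : ℝ} (hx : |x| ≤ K) :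
    Real.sigmoid (-K) ^ 2 ≤ rho' x * (1 - rho' x) := by
  rw [rho'_eq_sigmoid, ← Real.sigmoid_neg, sq]
  have h := abs_le.1 hx
  exact mul_le_mul (Real.sigmoid_le (by linarith)) (Real.sigmoid_le (by linarith))
    (Real.sigmoid_nonneg _) (Real.sigmoid_nonneg _)

lemma ConvexOn.add_mul_sub_le_of_hasDerivAt {S : Set ℝ} {f : ℝ → ℝ} {f' x y : ℝ}
    (hf : ConvexOn ℝ S f) (hx : x ∈ S) (hy : y ∈ S) (hd : HasDerivAt f f' x) :
    f x + f' * (y - x) ≤ f y := by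
  rcases lt_trichotomy x y with hxy | rfl | hxy
  · have := hf.le_slope_of_hasDerivAt hx hy hxy hd
    rw [slope_def_field, le_div_iff₀ (sub_pos.2 hxy)] at this
    linarith
  · simp
  · have := hf.slope_le_of_hasDerivAt hy hx hxy hd
    rw [slope_def_field, div_le_iff₀ (sub_pos.2 hxy)] at this
    linarith

noncomputable def bregman (a h : ℝ) : ℝ := rho (a + h) - rho a - h * rho' a

lemma bregman_nonneg (a h : ℝ) : 0 ≤ bregman a h := by
  have := convexOn_rho.add_mul_sub_le_of_hasDerivAt (mem_univ a) (mem_univ (a + h))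
    (hasDerivAt_rho a)
  rw [bregman]
  linarith

lemma mul_sq_div_two_le_bregman {a h κ : ℝ}
    (hκ : ∀ x ∈ uIcc a (a + h), κ ≤ rho' x * (1 - rho' x)) : κ * h ^ 2 / 2 ≤ bregman a h := by
  have hg (x : ℝ) : HasDerivAt (fun x => rho x - κ / 2 * x ^ 2) (rho' x - κ * x) x :=
    ((hasDerivAt_rho x).sub ((hasDerivAt_pow 2 x).const_mul (κ / 2))).congr_deriv
      (by push_cast; ring)
  have hconv : ConvexOn ℝ (uIcc a (a + h)) fun x => rho x - κ / 2 * x ^ 2 := by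
    refine convexOn_of_hasDerivWithinAt2_nonneg (convex_uIcc _ _)
      (differentiable_rho.continuous.continuousOn.sub (by fun_prop))
      (fun x _ => (hg x).hasDerivWithinAt) (fun x _ => ?_)
      (fun x hx => sub_nonneg.2 (hκ x (interior_subset hx)))
    exact ((hasDerivAt_rho' x).sub ((hasDerivAt_id x).const_mul κ)).hasDerivWithinAt.congr_deriv
      (by ring)
  have := hconv.add_mul_sub_le_of_hasDerivAt left_mem_uIcc right_mem_uIcc (hg a)
  rw [bregman]
  linarith

lemma mul_sq_div_two_le_bregman_of_sq_add_sq_le {a h T : ℝ} (hT : a ^ 2 + h ^ 2 ≤ T) :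
    Real.sigmoid (-(2 * √T)) ^ 2 * h ^ 2 / 2 ≤ bregman a h := by
  have ha : |a| ≤ √T := Real.abs_le_sqrt (by nlinarith)
  have hh : |h| ≤ √T := Real.abs_le_sqrt (by nlinarith)
  refine mul_sq_div_two_le_bregman fun x hx => sigmoid_neg_sq_le_rho'_mul_one_sub ?_
  have := abs_sub_left_of_mem_uIcc hx
  rw [add_sub_cancel_left] at this
  calc |x| ≤ |a| + |x - a| := by simpa using abs_add_le a (x - a)
    _ ≤ 2 * √T := by linarith

lemma card_sub_sum_div_le_card_filter_le {ι : Type*} [Fintype ι] (f : ι → ℝ) (hf : ∀ i, 0 ≤ f i)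
    {T : ℝ} (hT : 0 < T) :
    (Fintype.card ι : ℝ) - (∑ i, f i) / T ≤ (Finset.univ.filter fun i => f i ≤ T).card := by
  classical
  have hbad : ((Finset.univ.filter fun i => ¬f i ≤ T).card : ℝ) ≤ (∑ i, f i) / T := by
    rw [le_div_iff₀ hT]
    calc ((Finset.univ.filter fun i => ¬f i ≤ T).card : ℝ) * T
        = ∑ _i ∈ Finset.univ.filter fun i => ¬f i ≤ T, T := by simp
      _ ≤ ∑ i ∈ Finset.univ.filter fun i => ¬f i ≤ T, f i :=
        Finset.sum_le_sum fun i hi => (not_le.1 (Finset.mem_filter.1 hi).2).le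
      _ ≤ ∑ i, f i := Finset.sum_le_sum_of_subset_of_nonneg (Finset.filter_subset _ _)
        fun i _ _ => hf i
  have hcard : ((Finset.univ.filter fun i => f i ≤ T).card : ℝ)
      + (Finset.univ.filter fun i => ¬f i ≤ T).card = Fintype.card ι := by
    exact_mod_cast Finset.card_filter_add_card_filter_not (s := Finset.univ) (fun i => f i ≤ T)
  linarith

-- `ρ'' ≥ curvatureBound` on `|x| ≤ 2√T`, `T = c₂ (C₃² + 1) / ζ`; by Condition 3 and Markov's
-- inequality, `⟨Xᵢ, β₀⟩² + ⟨Xᵢ, v⟩² ≤ T` for at least `(1 - ζ) n` indices when `‖v‖ ≤ 1`.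
noncomputable def curvatureBound (c₂ ζ C₃ : ℝ) : ℝ :=
  Real.sigmoid (-(2 * √(c₂ * (C₃ ^ 2 + 1) / ζ))) ^ 2

lemma curvatureBound_pos (c₂ ζ C₃ : ℝ) : 0 < curvatureBound c₂ ζ C₃ :=
  pow_pos (Real.sigmoid_pos _) 2

-- With `κ = c₁ (1 - ζ) curvatureBound / 2` and `√B = (a + C₄ √Λ) / κ + 1`, the radius
-- `t = √(B p / n)` satisfies `κ t n = (a + C₄ √Λ + κ) √(p n)`, strictly above the bound
-- `(a + C₄ √Λ) √(p n)` on `‖S‖ + τ √Λ`.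
noncomputable def rateConstant (a C₄ Λ c₁ c₂ ζ C₃ : ℝ) : ℝ :=
  ((a + C₄ * √Λ) / (c₁ * (1 - ζ) * curvatureBound c₂ ζ C₃ / 2) + 1) ^ 2

lemma one_le_rateConstant {a C₄ Λ c₁ c₂ ζ C₃ : ℝ} (ha : 0 ≤ a) (hC₄ : 0 ≤ C₄) (hc₁ : 0 < c₁)
    (hζ1 : ζ < 1) : 1 ≤ rateConstant a C₄ Λ c₁ c₂ ζ C₃ := by
  have := curvatureBound_pos c₂ ζ C₃
  have : 0 < 1 - ζ := by linarith
  exact one_le_pow₀ (le_add_of_nonneg_left (by positivity))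

section Deterministic

variable {n p : ℕ}

noncomputable def logLik (X : Fin n → EuclideanSpace ℝ (Fin p)) (Y : Fin n → ℝ)
    (β : EuclideanSpace ℝ (Fin p)) : ℝ :=
  ∑ i, (Y i * ⟪X i, β⟫ - rho ⟪X i, β⟫)

noncomputable def score (X : Fin n → EuclideanSpace ℝ (Fin p)) (Y : Fin n → ℝ)
    (β : EuclideanSpace ℝ (Fin p)) : EuclideanSpace ℝ (Fin p) :=
  ∑ i, (Y i - rho' ⟪X i, β⟫) • X i

-- Condition 3 for one design, with the eigenvalue bounds on `∑_{i ∈ S} Xᵢ Xᵢᵀ` written as bounds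
-- on its quadratic form.
def RestrictedEigenBounds (c₁ c₂ ζ : ℝ) (X : Fin n → EuclideanSpace ℝ (Fin p)) : Prop :=
  ∀ S : Finset (Fin n), (1 - ζ) * n ≤ S.card → ∀ v : EuclideanSpace ℝ (Fin p),
    c₁ * S.card * ‖v‖ ^ 2 ≤ ∑ i ∈ S, ⟪X i, v⟫ ^ 2 ∧
      ∑ i ∈ S, ⟪X i, v⟫ ^ 2 ≤ c₂ * S.card * ‖v‖ ^ 2

lemma mapObj_eq_logLik {M : ℕ} (τ : ℝ) (X : Fin n → EuclideanSpace ℝ (Fin p)) (Y : Fin n → ℝ)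
    (Xs : Fin M → EuclideanSpace ℝ (Fin p)) (Ys : Fin M → ℝ) :
    mapObj τ X Y Xs Ys = logLik X Y + (τ / M) • logLik Xs Ys :=
  rfl

lemma concaveOn_logLik (X : Fin n → EuclideanSpace ℝ (Fin p)) (Y : Fin n → ℝ) :
    ConcaveOn ℝ univ (logLik X Y) := by
  refine ⟨convex_univ, fun β _ γ _ a b ha hb hab => ?_⟩
  simp only [logLik, smul_eq_mul, Finset.mul_sum, ← Finset.sum_add_distrib, inner_add_right,
    real_inner_smul_right]
  gcongr with i
  have := convexOn_rho.2 (mem_univ ⟪X i, β⟫) (mem_univ ⟪X i, γ⟫) ha hb hab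
  simp only [smul_eq_mul] at this
  linarith

lemma concaveOn_mapObj {M : ℕ} {τ : ℝ} (hτ : 0 ≤ τ) (X : Fin n → EuclideanSpace ℝ (Fin p))
    (Y : Fin n → ℝ) (Xs : Fin M → EuclideanSpace ℝ (Fin p)) (Ys : Fin M → ℝ) :
    ConcaveOn ℝ univ (mapObj τ X Y Xs Ys) := by
  rw [mapObj_eq_logLik]
  exact (concaveOn_logLik X Y).add ((concaveOn_logLik Xs Ys).smul (by positivity))

lemma logLik_add_sub (X : Fin n → EuclideanSpace ℝ (Fin p)) (Y : Fin n → ℝ)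
    (β v : EuclideanSpace ℝ (Fin p)) :
    logLik X Y (β + v) - logLik X Y β = ⟪score X Y β, v⟫ - ∑ i, bregman ⟪X i, β⟫ ⟪X i, v⟫ := by
  simp only [logLik, score, bregman, inner_add_right, sum_inner, real_inner_smul_left,
    ← Finset.sum_sub_distrib]
  exact Finset.sum_congr rfl fun i _ => by ring

lemma inner_score_le {X : Fin n → EuclideanSpace ℝ (Fin p)} {Y : Fin n → ℝ}
    (hY : ∀ i, Y i = 0 ∨ Y i = 1) (β v : EuclideanSpace ℝ (Fin p)) :
    ⟪score X Y β, v⟫ ≤ √(n * ∑ i, ⟪X i, v⟫ ^ 2) := by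
  calc ⟪score X Y β, v⟫ = ∑ i, (Y i - rho' ⟪X i, β⟫) * ⟪X i, v⟫ := by
        simp only [score, sum_inner, real_inner_smul_left]
    _ ≤ ∑ i, |⟪X i, v⟫| := by
        gcongr with i
        calc _ ≤ |Y i - rho' ⟪X i, β⟫| * |⟪X i, v⟫| := by rw [← abs_mul]; exact le_abs_self _
          _ ≤ 1 * |⟪X i, v⟫| := by gcongr; exact abs_sub_rho'_le_one (hY i) _
          _ = |⟪X i, v⟫| := one_mul _
    _ ≤ √(n * ∑ i, ⟪X i, v⟫ ^ 2) := by
        refine Real.le_sqrt_of_sq_le ?_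
        simpa using sq_sum_le_card_mul_sum_sq (s := Finset.univ) (f := fun i => |⟪X i, v⟫|)

lemma div_mul_logLik_add_sub_le {M : ℕ} {τ Λ : ℝ} (hτ : 0 ≤ τ)
    {Xs : Fin M → EuclideanSpace ℝ (Fin p)} {Ys : Fin M → ℝ} (hYs : ∀ i, Ys i = 0 ∨ Ys i = 1)
    (hop : ∀ v : EuclideanSpace ℝ (Fin p), (M : ℝ)⁻¹ * ∑ i, ⟪Xs i, v⟫ ^ 2 ≤ Λ * ‖v‖ ^ 2)
    (β v : EuclideanSpace ℝ (Fin p)) :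
    τ / M * (logLik Xs Ys (β + v) - logLik Xs Ys β) ≤ τ * √Λ * ‖v‖ := by
  rcases Nat.eq_zero_or_pos M with rfl | hM
  · simp only [Nat.cast_zero, div_zero, zero_mul]
    positivity
  have hM' : (0 : ℝ) < M := Nat.cast_pos.2 hM
  have hsum : ∑ i, ⟪Xs i, v⟫ ^ 2 ≤ M * Λ * ‖v‖ ^ 2 := by
    have := hop v
    rw [inv_mul_le_iff₀ hM'] at this
    linarith
  have hbreg : 0 ≤ ∑ i, bregman ⟪Xs i, β⟫ ⟪Xs i, v⟫ :=
    Finset.sum_nonneg fun i _ => bregman_nonneg _ _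
  calc τ / M * (logLik Xs Ys (β + v) - logLik Xs Ys β) ≤ τ / M * √(M * ∑ i, ⟪Xs i, v⟫ ^ 2) := by
        rw [logLik_add_sub]
        gcongr
        linarith [inner_score_le (X := Xs) hYs β v]
    _ ≤ τ / M * √((M * ‖v‖) ^ 2 * Λ) := by
        gcongr τ / M * √?_
        nlinarith
    _ = τ * √Λ * ‖v‖ := by
        rw [Real.sqrt_mul (sq_nonneg _), Real.sqrt_sq (by positivity)]
        field_simp

lemma RestrictedEigenBounds.le_card_filter_inner_sq_add_sq_le {c₁ c₂ ζ C₃ : ℝ}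
    {X : Fin n → EuclideanSpace ℝ (Fin p)} (hX : RestrictedEigenBounds c₁ c₂ ζ X) (hc₂ : 0 < c₂)
    (hζ : 0 < ζ) {β v : EuclideanSpace ℝ (Fin p)} (hβ : ‖β‖ ≤ C₃) (hv : ‖v‖ ≤ 1) :
    (1 - ζ) * n ≤ (Finset.univ.filter fun i =>
      ⟪X i, β⟫ ^ 2 + ⟪X i, v⟫ ^ 2 ≤ c₂ * (C₃ ^ 2 + 1) / ζ).card := by
  set T := c₂ * (C₃ ^ 2 + 1) / ζ with hT
  have hT0 : 0 < T := by positivity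
  have hn : (1 - ζ) * n ≤ (Finset.univ : Finset (Fin n)).card := by
    simp only [Finset.card_univ, Fintype.card_fin]
    nlinarith [(Nat.cast_nonneg n : (0 : ℝ) ≤ n)]
  have hsum : ∑ i, (⟪X i, β⟫ ^ 2 + ⟪X i, v⟫ ^ 2) ≤ ζ * n * T := by
    have hβ' := (hX _ hn β).2
    have hv' := (hX _ hn v).2
    simp only [Finset.card_univ, Fintype.card_fin] at hβ' hv'
    have hc₂n : 0 ≤ c₂ * n := by positivity
    have := mul_le_mul_of_nonneg_left (pow_le_pow_left₀ (norm_nonneg β) hβ 2) hc₂n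
    have := mul_le_mul_of_nonneg_left (pow_le_one₀ (n := 2) (norm_nonneg v) hv) hc₂n
    have : ζ * n * T = c₂ * n * (C₃ ^ 2 + 1) := by rw [hT]; field_simp
    rw [Finset.sum_add_distrib, this]
    linarith
  have := card_sub_sum_div_le_card_filter_le (fun i => ⟪X i, β⟫ ^ 2 + ⟪X i, v⟫ ^ 2)
    (fun i => by positivity) hT0
  rw [Fintype.card_fin] at this
  have : (∑ i, (⟪X i, β⟫ ^ 2 + ⟪X i, v⟫ ^ 2)) / T ≤ ζ * n := by rwa [div_le_iff₀ hT0]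
  linarith

lemma RestrictedEigenBounds.le_sum_bregman {c₁ c₂ ζ C₃ : ℝ}
    {X : Fin n → EuclideanSpace ℝ (Fin p)} (hX : RestrictedEigenBounds c₁ c₂ ζ X) (hc₁ : 0 ≤ c₁)
    (hc₂ : 0 < c₂) (hζ : 0 < ζ) {β v : EuclideanSpace ℝ (Fin p)} (hβ : ‖β‖ ≤ C₃) (hv : ‖v‖ ≤ 1) :
    c₁ * (1 - ζ) * n * curvatureBound c₂ ζ C₃ * ‖v‖ ^ 2 / 2
      ≤ ∑ i, bregman ⟪X i, β⟫ ⟪X i, v⟫ := by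
  set S := Finset.univ.filter fun i => ⟪X i, β⟫ ^ 2 + ⟪X i, v⟫ ^ 2 ≤ c₂ * (C₃ ^ 2 + 1) / ζ
  have hS : (1 - ζ) * n ≤ S.card := hX.le_card_filter_inner_sq_add_sq_le hc₂ hζ hβ hv
  have hκ : 0 ≤ curvatureBound c₂ ζ C₃ := (curvatureBound_pos c₂ ζ C₃).le
  calc c₁ * (1 - ζ) * n * curvatureBound c₂ ζ C₃ * ‖v‖ ^ 2 / 2
      ≤ curvatureBound c₂ ζ C₃ / 2 * (c₁ * S.card * ‖v‖ ^ 2) := by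
        have := mul_le_mul_of_nonneg_left hS (mul_nonneg hc₁ (mul_nonneg hκ (sq_nonneg ‖v‖)))
        linarith
    _ ≤ curvatureBound c₂ ζ C₃ / 2 * ∑ i ∈ S, ⟪X i, v⟫ ^ 2 := by
        gcongr
        exact (hX S hS v).1
    _ ≤ ∑ i ∈ S, bregman ⟪X i, β⟫ ⟪X i, v⟫ := by
        rw [Finset.mul_sum]
        refine Finset.sum_le_sum fun i hi => ?_
        have := mul_sq_div_two_le_bregman_of_sq_add_sq_le (Finset.mem_filter.1 hi).2
        rw [curvatureBound]
        linarith
    _ ≤ ∑ i, bregman ⟪X i, β⟫ ⟪X i, v⟫ :=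
        Finset.sum_le_sum_of_subset_of_nonneg (Finset.filter_subset _ _)
          fun i _ _ => bregman_nonneg _ _

theorem norm_sub_lt_of_norm_score_add_lt {M : ℕ} {τ Λ c₁ c₂ ζ C₃ t : ℝ}
    {X : Fin n → EuclideanSpace ℝ (Fin p)} {Y : Fin n → ℝ}
    {Xs : Fin M → EuclideanSpace ℝ (Fin p)} {Ys : Fin M → ℝ}
    {β₀ βhat : EuclideanSpace ℝ (Fin p)}
    (hX : RestrictedEigenBounds c₁ c₂ ζ X) (hc₁ : 0 ≤ c₁) (hc₂ : 0 < c₂) (hζ : 0 < ζ)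
    (hβ₀ : ‖β₀‖ ≤ C₃) (hτ : 0 ≤ τ) (hYs : ∀ i, Ys i = 0 ∨ Ys i = 1)
    (hop : ∀ v : EuclideanSpace ℝ (Fin p), (M : ℝ)⁻¹ * ∑ i, ⟪Xs i, v⟫ ^ 2 ≤ Λ * ‖v‖ ^ 2)
    (hmax : ∀ β, mapObj τ X Y Xs Ys β ≤ mapObj τ X Y Xs Ys βhat)
    (ht : 0 < t) (ht1 : t ≤ 1)
    (hscore : ‖score X Y β₀‖ + τ * √Λ < c₁ * (1 - ζ) * curvatureBound c₂ ζ C₃ * t * n / 2) :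
    ‖βhat - β₀‖ < t := by
  by_contra! hfar
  have hr : 0 < ‖βhat - β₀‖ := ht.trans_le hfar
  set v := (t / ‖βhat - β₀‖) • (βhat - β₀) with hv
  have hvt : ‖v‖ = t := by
    rw [hv, norm_smul, Real.norm_of_nonneg (by positivity), div_mul_cancel₀ _ hr.ne']
  have hseg : β₀ + v ∈ segment ℝ β₀ βhat := by
    rw [segment_eq_image']
    exact ⟨t / ‖βhat - β₀‖, ⟨by positivity, (div_le_one hr).2 hfar⟩, rfl⟩
  have hascent : mapObj τ X Y Xs Ys β₀ ≤ mapObj τ X Y Xs Ys (β₀ + v) := by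
    have := (concaveOn_mapObj hτ X Y Xs Ys).ge_on_segment (mem_univ _) (mem_univ _) hseg
    rwa [min_eq_left (hmax β₀)] at this
  have hobs : logLik X Y (β₀ + v) - logLik X Y β₀
      ≤ ‖score X Y β₀‖ * t - c₁ * (1 - ζ) * n * curvatureBound c₂ ζ C₃ * t ^ 2 / 2 := by
    rw [logLik_add_sub, ← hvt]
    have := real_inner_le_norm (score X Y β₀) v
    have := hX.le_sum_bregman hc₁ hc₂ hζ hβ₀ (hvt.trans_le ht1)
    linarith
  have hsyn := div_mul_logLik_add_sub_le hτ hYs hop β₀ v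
  rw [hvt] at hsyn
  simp only [mapObj_eq_logLik, Pi.add_apply, Pi.smul_apply, smul_eq_mul] at hascent
  nlinarith [mul_lt_mul_of_pos_left hscore ht]

theorem sq_norm_sub_le_of_norm_score_le {M : ℕ} {τ Λ c₁ c₂ ζ C₃ C₄ a : ℝ}
    {X : Fin n → EuclideanSpace ℝ (Fin p)} {Y : Fin n → ℝ}
    {Xs : Fin M → EuclideanSpace ℝ (Fin p)} {Ys : Fin M → ℝ}
    {β₀ βhat : EuclideanSpace ℝ (Fin p)}
    (hX : RestrictedEigenBounds c₁ c₂ ζ X) (hc₁ : 0 < c₁) (hc₂ : 0 < c₂) (hζ : 0 < ζ)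
    (hζ1 : ζ < 1) (hβ₀ : ‖β₀‖ ≤ C₃) (hτ : 0 ≤ τ) (hτC : τ ≤ C₄ * p) (hC₄ : 0 ≤ C₄) (ha : 0 ≤ a)
    (hYs : ∀ i, Ys i = 0 ∨ Ys i = 1)
    (hop : ∀ v : EuclideanSpace ℝ (Fin p), (M : ℝ)⁻¹ * ∑ i, ⟪Xs i, v⟫ ^ 2 ≤ Λ * ‖v‖ ^ 2)
    (hmax : ∀ β, mapObj τ X Y Xs Ys β ≤ mapObj τ X Y Xs Ys βhat)
    (hscore : ‖score X Y β₀‖ ≤ a * √(p * n)) (hp : 0 < p)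
    (hn : rateConstant a C₄ Λ c₁ c₂ ζ C₃ * p ≤ n) :
    ‖βhat - β₀‖ ^ 2 ≤ rateConstant a C₄ Λ c₁ c₂ ζ C₃ * p / n := by
  set κ := c₁ * (1 - ζ) * curvatureBound c₂ ζ C₃ / 2 with hκ
  have hκ0 : 0 < κ := by
    have := curvatureBound_pos c₂ ζ C₃
    have : 0 < 1 - ζ := by linarith
    positivity
  set s := (a + C₄ * √Λ) / κ + 1 with hs
  have hs1 : 1 ≤ s := by
    have : 0 ≤ (a + C₄ * √Λ) / κ := by positivity
    linarith
  have hB : rateConstant a C₄ Λ c₁ c₂ ζ C₃ = s ^ 2 := rfl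
  rw [hB] at hn ⊢
  have hp' : (1 : ℝ) ≤ p := Nat.one_le_cast.2 hp
  have hpn : (p : ℝ) ≤ n := (le_mul_of_one_le_left (by positivity) (one_le_pow₀ hs1)).trans hn
  have hn0 : (0 : ℝ) < n := by linarith
  set t := s * √(p * n) / n with ht
  have htn : t * n = s * √(p * n) := div_mul_cancel₀ _ hn0.ne'
  have ht2 : t ^ 2 = s ^ 2 * p / n := by
    rw [ht, div_pow, mul_pow, Real.sq_sqrt (by positivity)]
    field_simp
  have hpsqrt : (p : ℝ) ≤ √(p * n) := Real.le_sqrt_of_sq_le (by nlinarith)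
  have hlt : ‖score X Y β₀‖ + τ * √Λ < c₁ * (1 - ζ) * curvatureBound c₂ ζ C₃ * t * n / 2 := by
    have hτΛ : τ * √Λ ≤ C₄ * √Λ * √(p * n) := by
      calc τ * √Λ ≤ C₄ * p * √Λ := by gcongr
        _ ≤ C₄ * √Λ * √(p * n) := by rw [mul_right_comm]; gcongr
    have : c₁ * (1 - ζ) * curvatureBound c₂ ζ C₃ * t * n / 2 = κ * s * √(p * n) := by
      rw [hκ, mul_assoc _ t, htn]; ring
    rw [this, hs, mul_add, mul_div_cancel₀ _ hκ0.ne']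
    nlinarith
  have ht1 : t ^ 2 ≤ 1 := by rwa [ht2, div_le_one hn0]
  have := norm_sub_lt_of_norm_score_add_lt hX hc₁.le hc₂ hζ hβ₀ hτ hYs hop hmax
    (by positivity) (by nlinarith) hlt
  rw [← ht2]
  exact pow_le_pow_left₀ (norm_nonneg _) this.le 2

lemma isClosed_setOf_restrictedEigenBounds (c₁ c₂ ζ : ℝ) :
    IsClosed {X : Fin n → EuclideanSpace ℝ (Fin p) | RestrictedEigenBounds c₁ c₂ ζ X} := by
  simp only [RestrictedEigenBounds, ofPred_forall, ofPred_and]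
  refine isClosed_iInter fun S => isClosed_iInter fun _ => isClosed_iInter fun v => ?_
  have : Continuous fun X : Fin n → EuclideanSpace ℝ (Fin p) => ∑ i ∈ S, ⟪X i, v⟫ ^ 2 := by
    fun_prop
  exact (isClosed_le continuous_const this).inter (isClosed_le this continuous_const)

end Deterministic

section Probability

variable {Ω : Type*} [MeasurableSpace Ω] {μ : Measure Ω}

lemma meas_lt_le_ofReal_div_of_integral_le [IsFiniteMeasure μ] {f : Ω → ℝ} (hf : 0 ≤ᵐ[μ] f)
    (hfi : Integrable f μ) {K c : ℝ} (hK : 0 < K) (hc : ∫ ω, f ω ∂μ ≤ c) :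
    μ {ω | K < f ω} ≤ ENNReal.ofReal (c / K) :=
  calc μ {ω | K < f ω} ≤ μ {ω | K ≤ f ω} :=
        measure_mono fun ω (hω : K < f ω) => hω.le
    _ = ENNReal.ofReal (μ.real {ω | K ≤ f ω}) := (ofReal_measureReal (measure_ne_top _ _)).symm
    _ ≤ ENNReal.ofReal (c / K) := ENNReal.ofReal_le_ofReal
        ((le_div_iff₀' hK).2 ((mul_meas_ge_le_integral_of_nonneg hf hfi K).trans hc))

lemma tendsto_measure_setOf_exists_lt_not [IsFiniteMeasure μ] {P : ℕ → Ω → Prop}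
    (hP : ∀ n, MeasurableSet {ω | P n ω}) (hae : ∀ᵐ ω ∂μ, ∃ N₀ : ℕ, ∀ n, N₀ < n → P n ω) :
    Tendsto (fun k : ℕ => μ {ω | ∃ n, k < n ∧ ¬P n ω}) atTop (nhds 0) := by
  have hmeas (k : ℕ) : MeasurableSet {ω | ∃ n, k < n ∧ ¬P n ω} := by
    simp only [ofPred_exists, ofPred_and]
    exact .iUnion fun n => (MeasurableSet.const _).inter (hP n).compl
  have hanti : Antitone fun k : ℕ => {ω | ∃ n, k < n ∧ ¬P n ω} :=
    fun k k' hkk' ω ⟨n, hn, h⟩ => ⟨n, hkk'.trans_lt hn, h⟩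
  have hnull : μ (⋂ k : ℕ, {ω | ∃ n, k < n ∧ ¬P n ω}) = 0 := by
    refine measure_mono_null (fun ω hω => ?_) (ae_iff.1 hae)
    rintro ⟨N₀, hN₀⟩
    obtain ⟨n, hn, h⟩ := mem_iInter.1 hω N₀
    exact h (hN₀ n hn)
  have := tendsto_measure_iInter_atTop (μ := μ) (fun k => (hmeas k).nullMeasurableSet) hanti
    ⟨0, measure_ne_top _ _⟩
  rwa [hnull] at this

lemma memLp_two_of_lintegral_le {E : Type*} [NormedAddCommGroup E] {f : Ω → E}
    (hf : AEStronglyMeasurable f μ) {c : ℝ} (h : ∫⁻ ω, (‖f ω‖₊ : ℝ≥0∞) ^ 2 ∂μ ≤ ENNReal.ofReal c) :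
    MemLp f 2 μ := by
  rw [memLp_two_iff_integrable_sq_norm hf]
  refine ⟨hf.norm.pow 2, (hasFiniteIntegral_iff_ofReal (ae_of_all _ fun ω => sq_nonneg _)).2 ?_⟩
  simp_rw [ENNReal.ofReal_pow (norm_nonneg _), ofReal_norm, enorm_eq_nnnorm]
  exact h.trans_lt ENNReal.ofReal_lt_top

lemma integral_norm_sq_le_of_lintegral_le {E : Type*} [NormedAddCommGroup E] {f : Ω → E}
    (hf : AEStronglyMeasurable f μ) {c : ℝ} (hc : 0 ≤ c)
    (h : ∫⁻ ω, (‖f ω‖₊ : ℝ≥0∞) ^ 2 ∂μ ≤ ENNReal.ofReal c) :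
    ∫ ω, ‖f ω‖ ^ 2 ∂μ ≤ c := by
  rw [integral_eq_lintegral_of_nonneg_ae (ae_of_all _ fun ω => sq_nonneg _) (hf.norm.pow 2)]
  simp_rw [ENNReal.ofReal_pow (norm_nonneg _), ofReal_norm, enorm_eq_nnnorm]
  exact ENNReal.toReal_le_of_le_ofReal hc h

lemma integral_sub_smul_eq_zero_of_condExp [IsFiniteMeasure μ] {d : Type*} [Fintype d]
    {X : Ω → EuclideanSpace ℝ d} {Y g : Ω → ℝ} (hX : Measurable X) (hY : Integrable Y μ)
    (hYX : Integrable (fun ω => Y ω • X ω) μ) (hgX : Integrable (fun ω => g ω • X ω) μ)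
    (hg : μ[Y | MeasurableSpace.comap X inferInstance] =ᵐ[μ] g) :
    ∫ ω, (Y ω - g ω) • X ω ∂μ = 0 := by
  have hm := hX.comap_le
  have hXm : StronglyMeasurable[MeasurableSpace.comap X inferInstance] X :=
    (measurable_iff_comap_le.2 le_rfl).stronglyMeasurable
  simp_rw [sub_smul]
  rw [integral_sub hYX hgX, sub_eq_zero]
  calc ∫ ω, Y ω • X ω ∂μ
      = ∫ ω, μ[fun ω => Y ω • X ω | MeasurableSpace.comap X inferInstance] ω ∂μ :=
        (integral_condExp hm).symm
    _ = ∫ ω, (μ[Y | MeasurableSpace.comap X inferInstance] • X) ω ∂μ :=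
        integral_congr_ae
          (condExp_smul_of_aestronglyMeasurable_right hY hYX hXm.aestronglyMeasurable)
    _ = ∫ ω, g ω • X ω ∂μ := integral_congr_ae (hg.mono fun ω h => by simp [h])

lemma integral_norm_sum_sq_of_indepFun [IsProbabilityMeasure μ] {ι d : Type*} [Fintype ι]
    [Fintype d]
    {W : ι → Ω → EuclideanSpace ℝ d} (hW : ∀ i, MemLp (W i) 2 μ)
    (hmean : ∀ i, ∫ ω, W i ω ∂μ = 0) (hindep : Pairwise fun i j => IndepFun (W i) (W j) μ) :
    ∫ ω, ‖∑ i, W i ω‖ ^ 2 ∂μ = ∑ i, ∫ ω, ‖W i ω‖ ^ 2 ∂μ := by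
  have hcoord (i : ι) (k : d) : MemLp (fun ω => W i ω k) 2 μ :=
    (EuclideanSpace.proj (𝕜 := ℝ) k).comp_memLp' (hW i)
  have hcoord_mean (i : ι) (k : d) : ∫ ω, W i ω k ∂μ = 0 := by
    have := (EuclideanSpace.proj (𝕜 := ℝ) k).integral_comp_comm ((hW i).integrable one_le_two)
    simpa [hmean i] using this
  -- coordinatewise, additivity of the variance over pairwise independent centred summands
  have hvar (k : d) : ∫ ω, (∑ i, W i ω k) ^ 2 ∂μ = ∑ i, ∫ ω, W i ω k ^ 2 ∂μ := by
    have hsum := IndepFun.variance_sum (s := Finset.univ) (fun i _ => hcoord i k)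
      (fun i _ j _ hij => (hindep hij).comp (EuclideanSpace.proj (𝕜 := ℝ) k).measurable
        (EuclideanSpace.proj (𝕜 := ℝ) k).measurable)
    have hsum_mean : ∫ ω, (∑ i, fun ω => W i ω k) ω ∂μ = 0 := by
      simp [integral_finsetSum _ fun i _ => (hcoord i k).integrable one_le_two, hcoord_mean]
    rw [variance_of_integral_eq_zero
      (Finset.aemeasurable_sum _ fun i _ => (hcoord i k).aemeasurable) hsum_mean] at hsum
    simp_rw [variance_of_integral_eq_zero (hcoord _ k).aemeasurable (hcoord_mean _ k)] at hsum
    simpa [Finset.sum_apply] using hsum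
  simp_rw [EuclideanSpace.real_norm_sq_eq, WithLp.ofLp_sum, Finset.sum_apply]
  rw [integral_finsetSum _ fun k _ => (memLp_finsetSum _ fun i _ => hcoord i k).integrable_sq]
  simp_rw [hvar, integral_finsetSum _ fun k _ => (hcoord _ k).integrable_sq]
  exact Finset.sum_comm

variable {d : Type*} [Fintype d]

lemma measurable_residual_smul (β : EuclideanSpace ℝ d) :
    Measurable fun q : EuclideanSpace ℝ d × ℝ => (q.2 - rho' ⟪q.1, β⟫) • q.1 :=
  (measurable_snd.sub (measurable_rho'.comp (measurable_fst.inner measurable_const))).smul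
    measurable_fst

lemma memLp_residual_smul {X : Ω → EuclideanSpace ℝ d} {Y : Ω → ℝ} (β : EuclideanSpace ℝ d)
    (hX : Measurable X) (hY : Measurable Y)
    (hX2 : MemLp X 2 μ) (hYbin : ∀ᵐ ω ∂μ, Y ω = 0 ∨ Y ω = 1) :
    MemLp (fun ω => (Y ω - rho' ⟪X ω, β⟫) • X ω) 2 μ :=
  hX2.of_le ((measurable_residual_smul β).comp (hX.prodMk hY)).aestronglyMeasurable
    (hYbin.mono fun ω hω => by simpa using norm_sub_rho'_smul_le hω _ (X ω))

lemma integral_residual_smul_eq_zero [IsFiniteMeasure μ] {X : Ω → EuclideanSpace ℝ d}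
    {Y : Ω → ℝ} (β : EuclideanSpace ℝ d) (hX : Measurable X) (hY : Measurable Y) (hX2 : MemLp X 2 μ)
    (hYbin : ∀ᵐ ω ∂μ, Y ω = 0 ∨ Y ω = 1)
    (hBern : μ[Y | MeasurableSpace.comap X inferInstance] =ᵐ[μ] fun ω => rho' ⟪X ω, β⟫) :
    ∫ ω, (Y ω - rho' ⟪X ω, β⟫) • X ω ∂μ = 0 := by
  have hXi := hX2.integrable one_le_two
  refine integral_sub_smul_eq_zero_of_condExp hX ?_ ?_ ?_ hBern
  · refine .of_bound hY.aestronglyMeasurable 1 (hYbin.mono fun ω hω => ?_)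
    rcases hω with h | h <;> simp [h]
  · refine hXi.mono (hY.smul hX).aestronglyMeasurable (hYbin.mono fun ω hω => ?_)
    rcases hω with h | h <;> simp [h]
  · refine hXi.mono
      ((measurable_rho'.comp (hX.inner measurable_const)).smul hX).aestronglyMeasurable
      (ae_of_all _ fun ω => ?_)
    rw [norm_smul, Real.norm_eq_abs, rho'_eq_sigmoid, abs_of_nonneg (Real.sigmoid_nonneg _)]
    exact mul_le_of_le_one_left (norm_nonneg _) (Real.sigmoid_le_one _)

variable {n p : ℕ} {X : Fin n → Ω → EuclideanSpace ℝ (Fin p)} {Y : Fin n → Ω → ℝ}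

lemma memLp_score (β : EuclideanSpace ℝ (Fin p)) (hX : ∀ i, Measurable (X i))
    (hY : ∀ i, Measurable (Y i)) (hX2 : ∀ i, MemLp (X i) 2 μ)
    (hYbin : ∀ i, ∀ᵐ ω ∂μ, Y i ω = 0 ∨ Y i ω = 1) :
    MemLp (fun ω => score (fun i => X i ω) (fun i => Y i ω) β) 2 μ :=
  memLp_finsetSum _ fun i _ => memLp_residual_smul β (hX i) (hY i) (hX2 i) (hYbin i)

lemma integral_norm_score_sq_le [IsProbabilityMeasure μ] (β : EuclideanSpace ℝ (Fin p)) {C : ℝ}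
    (hX : ∀ i, Measurable (X i)) (hY : ∀ i, Measurable (Y i))
    (hindep : iIndepFun (fun i ω => (X i ω, Y i ω)) μ)
    (hYbin : ∀ i, ∀ᵐ ω ∂μ, Y i ω = 0 ∨ Y i ω = 1)
    (hBern : ∀ i, μ[Y i | MeasurableSpace.comap (X i) inferInstance]
      =ᵐ[μ] fun ω => rho' ⟪X i ω, β⟫)
    (hX2 : ∀ i, MemLp (X i) 2 μ) (hmom : ∀ i, ∫ ω, ‖X i ω‖ ^ 2 ∂μ ≤ C) :
    ∫ ω, ‖score (fun i => X i ω) (fun i => Y i ω) β‖ ^ 2 ∂μ ≤ n * C := by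
  have hW (i : Fin n) := memLp_residual_smul β (hX i) (hY i) (hX2 i) (hYbin i)
  calc ∫ ω, ‖score (fun i => X i ω) (fun i => Y i ω) β‖ ^ 2 ∂μ
      = ∑ i, ∫ ω, ‖(Y i ω - rho' ⟪X i ω, β⟫) • X i ω‖ ^ 2 ∂μ :=
        integral_norm_sum_sq_of_indepFun hW
          (fun i => integral_residual_smul_eq_zero β (hX i) (hY i) (hX2 i) (hYbin i) (hBern i))
          (fun i j hij => (hindep.indepFun hij).comp (measurable_residual_smul β)
            (measurable_residual_smul β))
    _ ≤ ∑ _i : Fin n, C := by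
        refine Finset.sum_le_sum fun i _ => le_trans (integral_mono_ae
          ((hW i).integrable_norm_pow two_ne_zero) ((hX2 i).integrable_norm_pow two_ne_zero)
          ((hYbin i).mono fun ω hω => ?_)) (hmom i)
        exact pow_le_pow_left₀ (norm_nonneg _) (norm_sub_rho'_smul_le hω _ _) 2
    _ = n * C := by simp

lemma measure_lt_norm_score_sq_le [IsProbabilityMeasure μ] (β : EuclideanSpace ℝ (Fin p))
    {C ε : ℝ} (hC : 0 < C) (hε : 0 < ε) (hn : 0 < n) (hX : ∀ i, Measurable (X i))
    (hY : ∀ i, Measurable (Y i)) (hindep : iIndepFun (fun i ω => (X i ω, Y i ω)) μ)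
    (hYbin : ∀ i, ∀ᵐ ω ∂μ, Y i ω = 0 ∨ Y i ω = 1)
    (hBern : ∀ i, μ[Y i | MeasurableSpace.comap (X i) inferInstance]
      =ᵐ[μ] fun ω => rho' ⟪X i ω, β⟫)
    (hmom : ∀ i, ∫⁻ ω, (‖X i ω‖₊ : ℝ≥0∞) ^ 2 ∂μ ≤ ENNReal.ofReal C) :
    μ {ω | C / ε * n < ‖score (fun i => X i ω) (fun i => Y i ω) β‖ ^ 2} ≤ ENNReal.ofReal ε := by
  have hX2 (i : Fin n) := memLp_two_of_lintegral_le (hX i).aestronglyMeasurable (hmom i)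
  have := meas_lt_le_ofReal_div_of_integral_le (ae_of_all _ fun ω => sq_nonneg _)
    ((memLp_score β hX hY hX2 hYbin).integrable_norm_pow two_ne_zero) (K := C / ε * n)
    (by positivity)
    (integral_norm_score_sq_le β hX hY hindep hYbin hBern hX2 fun i =>
      integral_norm_sq_le_of_lintegral_le (hX i).aestronglyMeasurable hC.le (hmom i))
  convert this using 2
  field_simp

theorem measure_rate_lt_sq_norm_sub_le [IsProbabilityMeasure μ] {M : ℕ}
    {τ Λ C₂ C₃ C₄ c₁ c₂ ζ ε : ℝ}
    {β₀ : EuclideanSpace ℝ (Fin p)} {Xs : Fin M → EuclideanSpace ℝ (Fin p)} {Ys : Fin M → ℝ}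
    {βhat : Ω → EuclideanSpace ℝ (Fin p)}
    (hε : 0 < ε) (hC₂ : 0 < C₂) (hC₄ : 0 ≤ C₄) (hc₁ : 0 < c₁) (hc₂ : 0 < c₂) (hζ0 : 0 < ζ)
    (hζ1 : ζ < 1) (hmeasX : ∀ i, Measurable (X i)) (hmeasY : ∀ i, Measurable (Y i))
    (hindep : iIndepFun (fun i ω => (X i ω, Y i ω)) μ)
    (hYbin : ∀ i, ∀ᵐ ω ∂μ, Y i ω = 0 ∨ Y i ω = 1)
    (hBern : ∀ i, μ[Y i | MeasurableSpace.comap (X i) inferInstance]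
      =ᵐ[μ] fun ω => rho' ⟪X i ω, β₀⟫)
    (hβ₀ : ‖β₀‖ ≤ C₃) (hmom : ∀ i, ∫⁻ ω, (‖X i ω‖₊ : ℝ≥0∞) ^ 2 ∂μ ≤ ENNReal.ofReal (C₂ * p))
    (hYs : ∀ i, Ys i = 0 ∨ Ys i = 1)
    (hop : ∀ v : EuclideanSpace ℝ (Fin p), (M : ℝ)⁻¹ * ∑ i, ⟪Xs i, v⟫ ^ 2 ≤ Λ * ‖v‖ ^ 2)
    (hτ : 0 ≤ τ) (hτC : τ ≤ C₄ * p)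
    (hmax : ∀ᵐ ω ∂μ, ∀ β, mapObj τ (fun i => X i ω) (fun i => Y i ω) Xs Ys β
      ≤ mapObj τ (fun i => X i ω) (fun i => Y i ω) Xs Ys (βhat ω))
    (hn : rateConstant √(C₂ / ε) C₄ Λ c₁ c₂ ζ C₃ * p ≤ n) :
    μ {ω | rateConstant √(C₂ / ε) C₄ Λ c₁ c₂ ζ C₃ * p / n < ‖βhat ω - β₀‖ ^ 2}
      ≤ μ {ω | ¬RestrictedEigenBounds c₁ c₂ ζ fun i => X i ω} + ENNReal.ofReal ε := by
  rcases Nat.eq_zero_or_pos p with rfl | hp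
  · simp [EuclideanSpace.norm_eq]
  set B := rateConstant √(C₂ / ε) C₄ Λ c₁ c₂ ζ C₃
  have hn0 : 0 < n := by
    have := one_le_rateConstant (Real.sqrt_nonneg (C₂ / ε)) hC₄ hc₁ hζ1 (Λ := Λ) (c₂ := c₂)
      (C₃ := C₃)
    have : (1 : ℝ) ≤ p := Nat.one_le_cast.2 hp
    exact_mod_cast (by nlinarith : (0 : ℝ) < n)
  set K := C₂ * p / ε * n
  have hsub : {ω | B * p / n < ‖βhat ω - β₀‖ ^ 2}
      ⊆ ({ω | ¬RestrictedEigenBounds c₁ c₂ ζ fun i => X i ω}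
        ∪ {ω | K < ‖score (fun i => X i ω) (fun i => Y i ω) β₀‖ ^ 2})
        ∪ {ω | ¬∀ β, mapObj τ (fun i => X i ω) (fun i => Y i ω) Xs Ys β
          ≤ mapObj τ (fun i => X i ω) (fun i => Y i ω) Xs Ys (βhat ω)} := by
    intro ω (hω : B * p / n < ‖βhat ω - β₀‖ ^ 2)
    by_contra hgood
    simp only [mem_union, mem_ofPred_eq, not_or, not_not, not_lt] at hgood
    obtain ⟨⟨hXω, hscore⟩, hmaxω⟩ := hgood
    refine hω.not_ge (sq_norm_sub_le_of_norm_score_le hXω hc₁ hc₂ hζ0 hζ1 hβ₀ hτ hτC hC₄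
      (Real.sqrt_nonneg _) hYs hop hmaxω ?_ hp hn)
    rw [← Real.sqrt_mul (by positivity)]
    exact Real.le_sqrt_of_sq_le (hscore.trans_eq (by ring))
  calc μ {ω | B * p / n < ‖βhat ω - β₀‖ ^ 2}
      ≤ μ {ω | ¬RestrictedEigenBounds c₁ c₂ ζ fun i => X i ω}
        + μ {ω | K < ‖score (fun i => X i ω) (fun i => Y i ω) β₀‖ ^ 2} + 0 :=
        (measure_mono hsub).trans ((measure_union_le _ _).trans
          (add_le_add (measure_union_le _ _) (ae_iff.1 hmax).le))
    _ ≤ μ {ω | ¬RestrictedEigenBounds c₁ c₂ ζ fun i => X i ω} + ENNReal.ofReal ε := by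
        rw [add_zero]
        gcongr
        exact measure_lt_norm_score_sq_le β₀ (by positivity) hε hn0 hmeasX hmeasY hindep hYbin
          hBern hmom

end Probability

lemma eventually_mul_le_of_tendsto_div {p : ℕ → ℕ}
    (hpn : Tendsto (fun n => (p n : ℝ) / n) atTop (nhds 0)) {B : ℝ} (hB : 0 < B) :
    ∀ᶠ n : ℕ in atTop, B * p n ≤ n := by
  filter_upwards [hpn.eventually (gt_mem_nhds (inv_pos.2 hB)), eventually_gt_atTop 0] with n hn hn0
  rw [div_lt_iff₀ (Nat.cast_pos.2 hn0)] at hn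
  calc B * p n ≤ B * (B⁻¹ * n) := by gcongr
    _ = n := by field_simp

theorem stmt7_general {Ω : Type*} [MeasurableSpace Ω] (μ : Measure Ω) [IsProbabilityMeasure μ]
    (p M : ℕ → ℕ) (τ : ℕ → ℝ)
    (hpn : Tendsto (fun n => (p n : ℝ) / n) atTop (nhds 0))
    (C₂ C₃ C₄ Λ c₁ c₂ ζ : ℝ)
    (hC₂ : 0 < C₂) (hC₄ : 0 < C₄)
    (hc₁ : 0 < c₁) (hc₂ : 0 < c₂) (hζ0 : 0 < ζ) (hζ1 : ζ < 1)
    (X : (n : ℕ) → Fin n → Ω → EuclideanSpace ℝ (Fin (p n)))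
    (Y : (n : ℕ) → Fin n → Ω → ℝ)
    (β₀ : (n : ℕ) → EuclideanSpace ℝ (Fin (p n)))
    (Xs : (n : ℕ) → Fin (M n) → EuclideanSpace ℝ (Fin (p n)))
    (Ys : (n : ℕ) → Fin (M n) → ℝ)
    (βhat : (n : ℕ) → Ω → EuclideanSpace ℝ (Fin (p n)))
    (hmeasX : ∀ n i, Measurable (X n i)) (hmeasY : ∀ n i, Measurable (Y n i))
    -- observed pairs are independent across `i`
    (hindep : ∀ n, iIndepFun
        (fun i ω => (X n i ω, Y n i ω)) μ)
    -- responses are binary with `Y_i | X_i ~ Bernoulli(ρ'(⟨X_i, β₀⟩))`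
    (hYbin : ∀ n i, ∀ᵐ ω ∂μ, Y n i ω = 0 ∨ Y n i ω = 1)
    (hBern : ∀ n i,
      μ[Y n i | MeasurableSpace.comap (X n i) inferInstance]
        =ᵐ[μ] fun ω => rho' ⟪X n i ω, β₀ n⟫)
    -- Condition 4: bounded true signal
    (hβ₀ : ∀ n, ‖β₀ n‖ ≤ C₃)
    -- Condition 2: second-moment bound on the covariates
    (hmom : ∀ n i, ∫⁻ ω, (‖X n i ω‖₊ : ℝ≥0∞) ^ 2 ∂μ ≤ ENNReal.ofReal (C₂ * p n))
    -- Condition 3: uniform restricted eigenvalue condition, almost surely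
    (hcond3 : ∀ᵐ ω ∂μ, ∃ N₀ : ℕ, ∀ n, N₀ < n → ∀ S : Finset (Fin n),
        (1 - ζ) * n ≤ S.card → ∀ v : EuclideanSpace ℝ (Fin (p n)),
          c₁ * S.card * ‖v‖ ^ 2 ≤ ∑ i ∈ S, ⟪X n i ω, v⟫ ^ 2 ∧
            ∑ i ∈ S, ⟪X n i ω, v⟫ ^ 2 ≤ c₂ * S.card * ‖v‖ ^ 2)
    -- synthetic data are binary with a bounded second-moment matrix
    (hYsbin : ∀ n i, Ys n i = 0 ∨ Ys n i = 1)
    (hop : ∀ n (v : EuclideanSpace ℝ (Fin (p n))),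
      (M n : ℝ)⁻¹ * ∑ i, ⟪Xs n i, v⟫ ^ 2 ≤ Λ * ‖v‖ ^ 2)
    -- tuning parameter: `0 < τ ≤ C₄ p`
    (hτpos : ∀ n, 0 < τ n) (hτub : ∀ n, τ n ≤ C₄ * p n)
    -- `βhat n` is a MAP estimator
    (hmax : ∀ n, ∀ᵐ ω ∂μ, ∀ β : EuclideanSpace ℝ (Fin (p n)),
      mapObj (τ n) (fun i => X n i ω) (fun i => Y n i ω) (Xs n) (Ys n) β
        ≤ mapObj (τ n) (fun i => X n i ω) (fun i => Y n i ω) (Xs n) (Ys n) (βhat n ω)) :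
    ∀ ε : ℝ, 0 < ε → ∃ (B : ℝ) (N : ℕ), ∀ n, N ≤ n →
      μ {ω | B * (p n : ℝ) / n < ‖βhat n ω - β₀ n‖ ^ 2} ≤ ENNReal.ofReal ε := by
  intro ε hε
  have hgood := tendsto_measure_setOf_exists_lt_not (μ := μ)
    (P := fun n ω => RestrictedEigenBounds c₁ c₂ ζ fun i => X n i ω)
    (fun n => (isClosed_setOf_restrictedEigenBounds c₁ c₂ ζ).measurableSet.preimage
      (measurable_pi_lambda _ (hmeasX n))) hcond3
  obtain ⟨k, hk⟩ :=
    (hgood.eventually (eventually_le_nhds (ENNReal.ofReal_pos.2 (half_pos hε)))).exists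
  set B := rateConstant √(C₂ / (ε / 2)) C₄ Λ c₁ c₂ ζ C₃
  have hB : 0 < B :=
    zero_lt_one.trans_le (one_le_rateConstant (Real.sqrt_nonneg _) hC₄.le hc₁ hζ1)
  obtain ⟨N, hN⟩ := eventually_atTop.1 (eventually_mul_le_of_tendsto_div hpn hB)
  refine ⟨B, max N (k + 1), fun n hn => ?_⟩
  calc μ {ω | B * p n / n < ‖βhat n ω - β₀ n‖ ^ 2}
      ≤ μ {ω | ¬RestrictedEigenBounds c₁ c₂ ζ fun i => X n i ω} + ENNReal.ofReal (ε / 2) :=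
        measure_rate_lt_sq_norm_sub_le (half_pos hε) hC₂ hC₄.le hc₁ hc₂ hζ0 hζ1 (hmeasX n)
          (hmeasY n) (hindep n) (hYbin n) (hBern n) (hβ₀ n) (hmom n) (hYsbin n) (hop n)
          (hτpos n).le (hτub n) (hmax n) (hN n (le_of_max_le_left hn))
    _ ≤ μ {ω | ∃ m, k < m ∧ ¬RestrictedEigenBounds c₁ c₂ ζ fun i => X m i ω}
        + ENNReal.ofReal (ε / 2) := by
        gcongr
        exact fun h => ⟨n, by omega, h⟩
    _ ≤ ENNReal.ofReal (ε / 2) + ENNReal.ofReal (ε / 2) := by gcongr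
    _ = ENNReal.ofReal ε := by
        rw [← ENNReal.ofReal_add (half_pos hε).le (half_pos hε).le, add_halves]

/-- **Consistency of the MAP estimator when `p/n → 0`** (Theorem 3(i) of the paper).
Under Conditions 2–4 on the observed data and true coefficients, a bounded synthetic
second-moment matrix, and tuning parameter `0 < τ ≤ C₄ p`, the MAP estimator
satisfies `‖β̂_M − β₀‖² = O_p(p/n)`. -/
theorem stmt7 {Ω : Type*} [MeasurableSpace Ω] (μ : Measure Ω) [IsProbabilityMeasure μ]
    (p M : ℕ → ℕ) (τ : ℕ → ℝ) (hM : ∀ n, 1 ≤ M n)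
    (hpn : Tendsto (fun n => (p n : ℝ) / n) atTop (nhds 0))
    (C₂ C₃ C₄ Λ c₁ c₂ ζ : ℝ)
    (hC₂ : 0 < C₂) (hC₃ : 0 < C₃) (hC₄ : 0 < C₄) (hΛ : 0 < Λ)
    (hc₁ : 0 < c₁) (hc₂ : 0 < c₂) (hζ0 : 0 < ζ) (hζ1 : ζ < 1)
    (X : (n : ℕ) → Fin n → Ω → EuclideanSpace ℝ (Fin (p n)))
    (Y : (n : ℕ) → Fin n → Ω → ℝ)
    (β₀ : (n : ℕ) → EuclideanSpace ℝ (Fin (p n)))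
    (Xs : (n : ℕ) → Fin (M n) → EuclideanSpace ℝ (Fin (p n)))
    (Ys : (n : ℕ) → Fin (M n) → ℝ)
    (βhat : (n : ℕ) → Ω → EuclideanSpace ℝ (Fin (p n)))
    (hmeasX : ∀ n i, Measurable (X n i)) (hmeasY : ∀ n i, Measurable (Y n i))
    -- observed pairs are independent across `i`
    (hindep : ∀ n, iIndepFun
        (fun i ω => (X n i ω, Y n i ω)) μ)
    -- responses are binary with `Y_i | X_i ~ Bernoulli(ρ'(⟨X_i, β₀⟩))`
    (hYbin : ∀ n i, ∀ᵐ ω ∂μ, Y n i ω = 0 ∨ Y n i ω = 1)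
    (hBern : ∀ n i,
      μ[Y n i | MeasurableSpace.comap (X n i) inferInstance]
        =ᵐ[μ] fun ω => rho' ⟪X n i ω, β₀ n⟫)
    -- Condition 4: bounded true signal
    (hβ₀ : ∀ n, ‖β₀ n‖ ≤ C₃)
    -- Condition 2: second-moment bound on the covariates
    (hmom : ∀ n i, ∫⁻ ω, (‖X n i ω‖₊ : ℝ≥0∞) ^ 2 ∂μ ≤ ENNReal.ofReal (C₂ * p n))
    -- Condition 3: uniform restricted eigenvalue condition, almost surely
    (hcond3 : ∀ᵐ ω ∂μ, ∃ N₀ : ℕ, ∀ n, N₀ < n → ∀ S : Finset (Fin n),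
        (1 - ζ) * n ≤ S.card → ∀ v : EuclideanSpace ℝ (Fin (p n)),
          c₁ * S.card * ‖v‖ ^ 2 ≤ ∑ i ∈ S, ⟪X n i ω, v⟫ ^ 2 ∧
            ∑ i ∈ S, ⟪X n i ω, v⟫ ^ 2 ≤ c₂ * S.card * ‖v‖ ^ 2)
    -- synthetic data are binary with a bounded second-moment matrix
    (hYsbin : ∀ n i, Ys n i = 0 ∨ Ys n i = 1)
    (hop : ∀ n (v : EuclideanSpace ℝ (Fin (p n))),
      (M n : ℝ)⁻¹ * ∑ i, ⟪Xs n i, v⟫ ^ 2 ≤ Λ * ‖v‖ ^ 2)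
    -- tuning parameter: `0 < τ ≤ C₄ p`
    (hτpos : ∀ n, 0 < τ n) (hτub : ∀ n, τ n ≤ C₄ * p n)
    -- `βhat n` is a MAP estimator
    (hmax : ∀ n, ∀ᵐ ω ∂μ, ∀ β : EuclideanSpace ℝ (Fin (p n)),
      mapObj (τ n) (fun i => X n i ω) (fun i => Y n i ω) (Xs n) (Ys n) β
        ≤ mapObj (τ n) (fun i => X n i ω) (fun i => Y n i ω) (Xs n) (Ys n) (βhat n ω)) :
    ∀ ε : ℝ, 0 < ε → ∃ (B : ℝ) (N : ℕ), ∀ n, N ≤ n →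
      μ {ω | B * (p n : ℝ) / n < ‖βhat n ω - β₀ n‖ ^ 2} ≤ ENNReal.ofReal ε :=
  stmt7_general μ p M τ hpn C₂ C₃ C₄ Λ c₁ c₂ ζ hC₂ hC₄ hc₁ hc₂ hζ0 hζ1 X Y β₀ Xs Ys βhat hmeasX
    hmeasY hindep hYbin hBern hβ₀ hmom hcond3 hYsbin hop hτpos hτub hmax
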